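/- For v,u ∈ V, [Ψ^Q(τ(v)), τ(u)] = 2L_{v,u} − B(v,u)h as differential operators on the cone C = {Q=0} (i.e., modulo the ideal generated by Q). -/
import Mathlib


open MvPolynomial Matrix

/-- The quadratic form `Q = ∑ B_{ij} zᵢ zⱼ` as a polynomial. -/
noncomputable def Qpoly {n : ℕ} (B : Matrix (Fin n) (Fin n) ℂ) :
    MvPolynomial (Fin n) ℂ :=
  ∑ i, ∑ j, C (B i j) * X i * X j

/-- The shifted Euler operator `h = 2∑ zᵢ∂ᵢ + (n-2)` on polynomials. -/
noncomputable def hPoly {n : ℕ} (g : MvPolynomial (Fin n) ℂ) :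
    MvPolynomial (Fin n) ℂ :=
  2 * ∑ i, X i * pderiv i g + C ((n : ℂ) - 2) * g

/-- The Laplace-type operator `Box_Q = ∑ (B⁻¹)_{ij} ∂ᵢ∂ⱼ`. -/
noncomputable def boxPoly {n : ℕ} (B : Matrix (Fin n) (Fin n) ℂ)
    (g : MvPolynomial (Fin n) ℂ) : MvPolynomial (Fin n) ℂ :=
  ∑ i, ∑ j, C (B⁻¹ i j) * pderiv i (pderiv j g)

/-- Multiplication by the linear function `τ(u) = B(u,·)`. -/
noncomputable def tauMul {n : ℕ} (B : Matrix (Fin n) (Fin n) ℂ) (u : Fin n → ℂ)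
    (g : MvPolynomial (Fin n) ℂ) : MvPolynomial (Fin n) ℂ :=
  (∑ j, C ((u ᵥ* B) j) * X j) * g

/-- Directional derivative `∂_v` along `v`. -/
noncomputable def dirD {n : ℕ} (v : Fin n → ℂ) (g : MvPolynomial (Fin n) ℂ) :
    MvPolynomial (Fin n) ℂ :=
  ∑ i, C (v i) * pderiv i g

/-- The operator `L_{u,v} = τ(u)∂_v − τ(v)∂_u`. -/
noncomputable def Lop {n : ℕ} (B : Matrix (Fin n) (Fin n) ℂ) (u v : Fin n → ℂ)
    (g : MvPolynomial (Fin n) ℂ) : MvPolynomial (Fin n) ℂ :=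
  tauMul B u (dirD v g) - tauMul B v (dirD u g)

/-- The operator `Ψ^Q(τ(v)) = τ(v)·Box_Q − h∘∂_v`. -/
noncomputable def PsiTau {n : ℕ} (B : Matrix (Fin n) (Fin n) ℂ) (v : Fin n → ℂ)
    (g : MvPolynomial (Fin n) ℂ) : MvPolynomial (Fin n) ℂ :=
  tauMul B v (boxPoly B g) - hPoly (dirD v g)


lemma pderiv_lin {n : ℕ} (a : Fin n → ℂ) (i : Fin n) :
    pderiv i (∑ j, C (a j) * X j : MvPolynomial (Fin n) ℂ) = C (a i) := by
  simp [pderiv_X, Pi.single_apply, mul_ite, Finset.sum_ite_eq']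

lemma pderiv_tauMul {n : ℕ} (B : Matrix (Fin n) (Fin n) ℂ) (u : Fin n → ℂ)
    (g : MvPolynomial (Fin n) ℂ) (i : Fin n) :
    pderiv i (tauMul B u g) =
      C ((u ᵥ* B) i) * g + (∑ j, C ((u ᵥ* B) j) * X j) * pderiv i g := by
  rw [tauMul, pderiv_mul, pderiv_lin]

lemma vecMul_symm {n : ℕ} (B : Matrix (Fin n) (Fin n) ℂ) (hB : B.IsSymm)
    (u : Fin n → ℂ) : u ᵥ* B = B *ᵥ u := by
  rw [← hB.eq, vecMul_transpose, hB.eq]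

lemma dirD_tauMul {n : ℕ} (B : Matrix (Fin n) (Fin n) ℂ) (hB : B.IsSymm)
    (u v : Fin n → ℂ) (g : MvPolynomial (Fin n) ℂ) :
    dirD v (tauMul B u g) = C (v ⬝ᵥ B *ᵥ u) * g + tauMul B u (dirD v g) := by
  simp only [dirD, pderiv_tauMul, mul_add, Finset.sum_add_distrib]
  congr 1
  · simp only [← mul_assoc, ← C_mul]
    rw [← Finset.sum_mul, ← map_sum]
    rw [vecMul_symm B hB]
    rfl
  · rw [tauMul, Finset.mul_sum]
    congr 1; ext i; ring

lemma hPoly_tauMul {n : ℕ} (B : Matrix (Fin n) (Fin n) ℂ)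
    (u : Fin n → ℂ) (g : MvPolynomial (Fin n) ℂ) :
    hPoly (tauMul B u g) = tauMul B u (hPoly g) + 2 * tauMul B u g := by
  simp only [hPoly, pderiv_tauMul, mul_add, Finset.sum_add_distrib]
  simp only [tauMul]
  have h1 : ∑ i : Fin n, X i * (C ((u ᵥ* B) i) * g) =
      (∑ j, C ((u ᵥ* B) j) * X j) * g := by
    rw [Finset.sum_mul]; congr 1; ext i; ring
  have h2 : ∑ i : Fin n, X i * ((∑ j, C ((u ᵥ* B) j) * X j) * pderiv i g) =
      (∑ j, C ((u ᵥ* B) j) * X j) * ∑ i, X i * pderiv i g := by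
    rw [Finset.mul_sum]; congr 1; ext i; ring
  rw [h1, h2]; ring

lemma boxPoly_tauMul {n : ℕ} (B : Matrix (Fin n) (Fin n) ℂ) (hB : B.IsSymm)
    (hdet : IsUnit B.det) (u : Fin n → ℂ) (g : MvPolynomial (Fin n) ℂ) :
    boxPoly B (tauMul B u g) = tauMul B u (boxPoly B g) + 2 * dirD u g := by
  have h1 : B⁻¹ *ᵥ (u ᵥ* B) = u := by
    rw [vecMul_symm B hB, mulVec_mulVec, nonsing_inv_mul B hdet, one_mulVec]
  have h2 : (u ᵥ* B) ᵥ* B⁻¹ = u := by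
    rw [vecMul_vecMul, mul_nonsing_inv B hdet, vecMul_one]
  have key : ∀ i j : Fin n, pderiv i (pderiv j (tauMul B u g)) =
      C ((u ᵥ* B) j) * pderiv i g + C ((u ᵥ* B) i) * pderiv j g
        + (∑ k, C ((u ᵥ* B) k) * X k) * pderiv i (pderiv j g) := by
    intro i j
    rw [pderiv_tauMul, map_add, pderiv_C_mul, pderiv_mul, pderiv_lin]
    ring
  have e1 : ∀ i, ∑ j, B⁻¹ i j * (u ᵥ* B) j = u i := by
    intro i
    simpa [mulVec, dotProduct] using congrFun h1 i
  have e2 : ∀ j, ∑ i, B⁻¹ i j * (u ᵥ* B) i = u j := by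
    intro j
    simpa [vecMul, dotProduct, mul_comm] using congrFun h2 j
  simp only [boxPoly, key, mul_add, Finset.sum_add_distrib]
  have hA : (∑ i, ∑ j, C (B⁻¹ i j) * (C ((u ᵥ* B) j) * pderiv i g))
      = dirD u g := by
    unfold dirD
    refine Finset.sum_congr rfl fun i _ => ?_
    simp only [← mul_assoc, ← C_mul]
    rw [← Finset.sum_mul, ← map_sum, e1 i]
  have hBt : (∑ i, ∑ j, C (B⁻¹ i j) * (C ((u ᵥ* B) i) * pderiv j g))
      = dirD u g := by
    rw [Finset.sum_comm]
    unfold dirD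
    refine Finset.sum_congr rfl fun j _ => ?_
    simp only [← mul_assoc, ← C_mul]
    rw [← Finset.sum_mul, ← map_sum, e2 j]
  have hC : (∑ i, ∑ j, C (B⁻¹ i j) *
        ((∑ k, C ((u ᵥ* B) k) * X k) * pderiv i (pderiv j g)))
      = (∑ k, C ((u ᵥ* B) k) * X k) *
          ∑ i, ∑ j, C (B⁻¹ i j) * pderiv i (pderiv j g) := by
    rw [Finset.mul_sum]
    refine Finset.sum_congr rfl fun i _ => ?_
    rw [Finset.mul_sum]
    refine Finset.sum_congr rfl fun j _ => ?_
    ring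
  rw [hA, hBt, hC, tauMul]
  ring

lemma hPoly_add {n : ℕ} (a b : MvPolynomial (Fin n) ℂ) :
    hPoly (a + b) = hPoly a + hPoly b := by
  simp only [hPoly, map_add, mul_add, Finset.sum_add_distrib]
  ring

lemma hPoly_C_mul {n : ℕ} (c : ℂ) (g : MvPolynomial (Fin n) ℂ) :
    hPoly (C c * g) = C c * hPoly g := by
  simp only [hPoly, pderiv_C_mul]
  have : ∑ i : Fin n, X i * (C c * pderiv i g)
      = C c * ∑ i, X i * pderiv i g := by
    rw [Finset.mul_sum]; congr 1; ext i; ring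
  rw [this]; ring


/-- The commutation relation `[Ψ^Q(τ(v)), τ(u)] = 2L_{v,u} − B(v,u)h` as
differential operators on the cone `{Q = 0}`, i.e. modulo the ideal
generated by `Q`. -/
theorem PsiTau_tau_commutator (n : ℕ) (B : Matrix (Fin n) (Fin n) ℂ)
    (hB : B.IsSymm) (hdet : IsUnit B.det) (u v : Fin n → ℂ)
    (f : MvPolynomial (Fin n) ℂ) :
    (PsiTau B v (tauMul B u f) - tauMul B u (PsiTau B v f)) -
        (2 * Lop B v u f - C (v ⬝ᵥ B *ᵥ u) * hPoly f) ∈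
      Ideal.span {Qpoly B} := by
  have key : (PsiTau B v (tauMul B u f) - tauMul B u (PsiTau B v f)) -
      (2 * Lop B v u f - C (v ⬝ᵥ B *ᵥ u) * hPoly f) = 0 := by
    rw [PsiTau, PsiTau, boxPoly_tauMul B hB hdet, dirD_tauMul B hB,
      hPoly_add, hPoly_C_mul, hPoly_tauMul, Lop]
    simp only [tauMul, mul_add]
    ring
  rw [key]
  exact Ideal.zero_mem _
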